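/- arXiv:1512.02297 — 3 statements merged into one kernel-verified Lean document; each statement's English description precedes it below -/
import Mathlib

section
/- There is a constant C > 0 (depending only on the fixed cutoff β) such that for every ε > 0 and every radial F̄ ∈ C_c^∞(ℝ³), F̄(x) = f̄(|x|), the Neumann-regularized function F_ε(x) = f̄(ε β(|x|/ε)) satisfies ‖F_ε − F̄‖²_{L²(ℝ³)} ≤ C ε² ‖∇F̄‖²_{L²(B_{2ε})}. -/
open MeasureTheory Filter Set
open scoped Topology

noncomputable section

abbrev E3 : Type := EuclideanSpace ℝ (Fin 3)

lemma aux_cs (f : ℝ → ℝ) {a b : ℝ} (hab : a ≤ b) (hf : Continuous f) :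
    (∫ t in Ioc a b, f t) ^ 2 ≤ (b - a) * ∫ t in Ioc a b, f t ^ 2 := by
  rcases eq_or_lt_of_le hab with rfl | hlt
  · simp
  have hfi : IntegrableOn f (Ioc a b) := hf.integrableOn_Ioc
  have hf2i : IntegrableOn (fun t => f t ^ 2) (Ioc a b) := (hf.pow 2).integrableOn_Ioc
  set I := ∫ t in Ioc a b, f t with hI
  set J := ∫ t in Ioc a b, f t ^ 2 with hJ
  set M := b - a with hM
  have hM0 : 0 < M := sub_pos.2 hlt
  have hvol : (volume (Ioc a b)).toReal = M := by
    rw [Real.volume_Ioc, ENNReal.toReal_ofReal hM0.le]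
  have hfin : volume (Ioc a b) ≠ ⊤ := by
    rw [Real.volume_Ioc]; exact ENNReal.ofReal_ne_top
  have h0 : 0 ≤ ∫ t in Ioc a b, (M * f t - I) ^ 2 :=
    setIntegral_nonneg measurableSet_Ioc fun t _ => sq_nonneg _
  have e1 : ∫ t in Ioc a b, ((M ^ 2 * f t ^ 2 - 2 * M * I * f t) + I ^ 2)
      = (∫ t in Ioc a b, (M ^ 2 * f t ^ 2 - 2 * M * I * f t)) + ∫ _t in Ioc a b, (I ^ 2 : ℝ) :=
    integral_add (μ := volume.restrict (Ioc a b))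
      (f := fun t => M ^ 2 * f t ^ 2 - 2 * M * I * f t) (g := fun _ => I ^ 2)
      ((hf2i.const_mul _).sub (hfi.const_mul _))
      (integrableOn_const hfin)
  have e2 : ∫ t in Ioc a b, (M ^ 2 * f t ^ 2 - 2 * M * I * f t)
      = (∫ t in Ioc a b, M ^ 2 * f t ^ 2) - ∫ t in Ioc a b, 2 * M * I * f t :=
    integral_sub (μ := volume.restrict (Ioc a b))
      (f := fun t => M ^ 2 * f t ^ 2) (g := fun t => 2 * M * I * f t)
      (hf2i.const_mul _) (hfi.const_mul _)
  have e3 : ∫ t in Ioc a b, M ^ 2 * f t ^ 2 = M ^ 2 * J := integral_const_mul _ _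
  have e4 : ∫ t in Ioc a b, 2 * M * I * f t = 2 * M * I * I := integral_const_mul _ _
  have e5 : ∫ _t in Ioc a b, (I ^ 2 : ℝ) = I ^ 2 * M := by
    rw [setIntegral_const, smul_eq_mul, measureReal_def, hvol, mul_comm]
  have hexp : ∫ t in Ioc a b, (M * f t - I) ^ 2
      = M ^ 2 * J - 2 * M * I * I + I ^ 2 * M := by
    have hpt : ∀ t, (M * f t - I) ^ 2
        = (M ^ 2 * f t ^ 2 - 2 * M * I * f t) + I ^ 2 := by intro t; ring
    simp_rw [hpt]
    rw [e1, e2, e3, e4, e5]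
  rw [hexp] at h0
  nlinarith [h0, hM0, sq_nonneg I]

lemma aux_grad (Fb : E3 → ℝ) (fb : ℝ → ℝ) (hFb : ContDiff ℝ (⊤ : ℕ∞) Fb)
    (hrad : ∀ x : E3, Fb x = fb ‖x‖)
    (g : ℝ → ℝ) (hgdef : g = fun r => Fb (r • (EuclideanSpace.single (0 : Fin 3) (1:ℝ))))
    (x : E3) (hx : x ≠ 0) :
    (deriv g ‖x‖) ^ 2 ≤ ‖gradient Fb x‖ ^ 2 := by
  set v : E3 := EuclideanSpace.single (0 : Fin 3) (1:ℝ) with hv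
  have hvn : ‖v‖ = 1 := by simp [hv]
  have hgfb : ∀ r : ℝ, 0 ≤ r → g r = fb r := by
    intro r hr
    rw [hgdef]
    simp only [hrad, norm_smul, hvn, mul_one, Real.norm_eq_abs, abs_of_nonneg hr]
  have hgd : Differentiable ℝ g := by
    rw [hgdef]
    exact (hFb.differentiable (by simp)).comp (differentiable_id.smul_const v)
  set r : ℝ := ‖x‖ with hr
  have hr0 : 0 < r := by simpa [hr] using norm_pos_iff.2 hx
  set u : E3 := r⁻¹ • x with hu
  have hun : ‖u‖ = 1 := by
    rw [hu, norm_smul, Real.norm_eq_abs, abs_of_nonneg (inv_nonneg.2 hr0.le), ← hr]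
    field_simp
  have hxu : x = r • u := by
    rw [hu, smul_smul, mul_inv_cancel₀ hr0.ne', one_smul]
  have hline : HasDerivAt (fun t : ℝ => x + t • u) u 0 := by
    simpa using ((hasDerivAt_id (0:ℝ)).smul_const u).const_add x
  have hF : HasFDerivAt Fb (fderiv ℝ Fb x) x := (hFb.differentiable (by simp) x).hasFDerivAt
  have hcomp : HasDerivAt (fun t : ℝ => Fb (x + t • u)) (fderiv ℝ Fb x u) (0:ℝ) := by
    have h0 : HasFDerivAt Fb (fderiv ℝ Fb x) ((fun t : ℝ => x + t • u) 0) := by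
      simpa using hF
    exact h0.comp_hasDerivAt (0:ℝ) hline
  have heq : (fun t : ℝ => Fb (x + t • u)) =ᶠ[nhds (0:ℝ)] fun t : ℝ => g (r + t) := by
    have hmem : Ioo (-r) r ∈ nhds (0:ℝ) := Ioo_mem_nhds (by linarith) hr0
    filter_upwards [hmem] with t ht
    have h1 : x + t • u = (r + t) • u := by rw [hxu, add_smul]
    have h2 : (0:ℝ) ≤ r + t := by have := ht.1; linarith
    rw [h1, hrad, norm_smul, hun, mul_one, Real.norm_eq_abs, abs_of_nonneg h2,
      ← hgfb _ h2]
  have hg2 : HasDerivAt (fun t : ℝ => g (r + t)) (deriv g r) (0:ℝ) := by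
    have h1 : HasDerivAt (fun t : ℝ => r + t) 1 0 := by
      simpa using (hasDerivAt_id (0:ℝ)).const_add r
    have h0 : HasDerivAt g (deriv g r) ((fun t : ℝ => r + t) 0) := by
      simpa using (hgd r).hasDerivAt
    simpa [Function.comp_def] using h0.comp (0:ℝ) h1
  have hdeq : deriv g r = fderiv ℝ Fb x u := by
    have h1 : HasDerivAt (fun t : ℝ => g (r + t)) (fderiv ℝ Fb x u) (0:ℝ) :=
      heq.hasDerivAt_iff.1 hcomp
    exact (hg2.unique h1)
  have hnormg : ‖gradient Fb x‖ = ‖fderiv ℝ Fb x‖ := by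
    rw [gradient]
    exact LinearIsometryEquiv.norm_map _ _
  have hb : |deriv g r| ≤ ‖gradient Fb x‖ := by
    rw [hdeq, hnormg]
    calc |fderiv ℝ Fb x u| = ‖fderiv ℝ Fb x u‖ := rfl
      _ ≤ ‖fderiv ℝ Fb x‖ * ‖u‖ := (fderiv ℝ Fb x).le_opNorm u
      _ = ‖fderiv ℝ Fb x‖ := by rw [hun, mul_one]
  calc (deriv g r) ^ 2 = |deriv g r| ^ 2 := (sq_abs _).symm
    _ ≤ ‖gradient Fb x‖ ^ 2 := pow_le_pow_left₀ (abs_nonneg _) hb 2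

lemma aux_polar (φ : ℝ → ℝ) :
    ∫ x : E3, φ ‖x‖ = (3 * (volume (Metric.ball (0:E3) 1)).toReal)
      * ∫ r in Ioi (0:ℝ), r ^ 2 * φ r := by
  have h := MeasureTheory.integral_fun_norm_addHaar (volume : Measure E3) φ
  rw [h]
  have hdim : Module.finrank ℝ E3 = 3 := finrank_euclideanSpace_fin
  rw [hdim]
  simp only [nsmul_eq_mul, smul_eq_mul, Nat.cast_ofNat]
  rw [measureReal_def]
  ring

set_option maxHeartbeats 1000000 in
/-- `L²(ℝ³)` estimate for the Neumann regularization: there is a constant `C > 0`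
(depending only on the fixed cutoff `β`) such that for every `ε > 0` and every radial
`Fb ∈ C_c^∞(ℝ³)`, `Fb(x) = fb(‖x‖)`, the function `F_ε(x) = fb(ε β(‖x‖/ε))` satisfies
`‖F_ε − Fb‖²_{L²(ℝ³)} ≤ C ε² ‖∇Fb‖²_{L²(B_{2ε})}`. -/
theorem neumann_data_L2_estimate
    (β : ℝ → ℝ) (C₀ : ℝ) (hC₀ : 0 < C₀)
    (hβC2 : ContDiffOn ℝ 2 β (Set.Ici 0))
    (hβmono : MonotoneOn β (Set.Ici 0))
    (hβone : ∀ s ∈ Set.Icc (0:ℝ) 1, β s = 1)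
    (hβid : ∀ s : ℝ, 2 ≤ s → β s = s)
    (hβlt : ∀ s ∈ Set.Ioo (1:ℝ) 2, β s < s)
    (hβ' : ∀ s ∈ Set.Ioo (1:ℝ) 2, 0 < deriv β s)
    (hβ'' : ∀ s ∈ Set.Ioo (1:ℝ) 2, |deriv (deriv β) s| ≤ C₀ * deriv β s) :
    ∃ C > 0, ∀ ε > 0, ∀ (Fb : E3 → ℝ) (fb : ℝ → ℝ),
      ContDiff ℝ (⊤ : ℕ∞) Fb → HasCompactSupport Fb → (∀ x : E3, Fb x = fb ‖x‖) →
      (∫ x : E3, (fb (ε * β (‖x‖ / ε)) - Fb x) ^ 2)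
        ≤ C * ε ^ 2 * ∫ x in Metric.ball (0:E3) (2 * ε), ‖gradient Fb x‖ ^ 2 := by
  refine ⟨8, by norm_num, ?_⟩
  intro ε hε Fb fb hFb hsupp hrad
  set v : E3 := EuclideanSpace.single (0 : Fin 3) (1:ℝ) with hv
  have hvn : ‖v‖ = 1 := by simp [hv]
  set g : ℝ → ℝ := fun r => Fb (r • v) with hgdef
  have hgfb : ∀ r : ℝ, 0 ≤ r → g r = fb r := by
    intro r hr
    rw [hgdef]
    simp only [hrad, norm_smul, hvn, mul_one, Real.norm_eq_abs, abs_of_nonneg hr]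
  have hgsmooth : ContDiff ℝ (⊤ : ℕ∞) g :=
    hFb.comp (contDiff_id.smul contDiff_const)
  have hgd : Differentiable ℝ g := hgsmooth.differentiable (by simp)
  have hg'cont : Continuous (deriv g) := hgsmooth.continuous_deriv (by simp)
  have hd2cont : Continuous (fun t : ℝ => t ^ 2 * deriv g t ^ 2) :=
    (continuous_id.pow 2).mul (hg'cont.pow 2)
  have h2ε : (0:ℝ) < 2 * ε := by linarith
  have hβ0 : ∀ s : ℝ, 0 ≤ s → 1 ≤ β s := by
    intro s hs
    have h01 : β 0 = 1 := hβone 0 ⟨le_refl 0, zero_le_one⟩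
    calc (1:ℝ) = β 0 := h01.symm
      _ ≤ β s := hβmono (self_mem_Ici) hs hs
  -- the radial profile of the difference
  set φ : ℝ → ℝ := fun r => (g (ε * β (r / ε)) - g r) ^ 2 with hφdef
  set J : ℝ := ∫ t in Ioc 0 (2 * ε), t ^ 2 * deriv g t ^ 2 with hJdef
  have hJ0 : 0 ≤ J :=
    setIntegral_nonneg measurableSet_Ioc fun t _ => mul_nonneg (sq_nonneg _) (sq_nonneg _)
  -- FTC
  have hftc : ∀ p q : ℝ, p ≤ q → g q - g p = ∫ t in Ioc p q, deriv g t := by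
    intro p q hpq
    rw [← intervalIntegral.integral_of_le hpq]
    exact (intervalIntegral.integral_deriv_eq_sub (fun t _ => hgd t)
      (hg'cont.intervalIntegrable p q)).symm

  -- the 1D pointwise estimate
  have key : ∀ r ∈ Ioi (0:ℝ), r ^ 2 * φ r
      ≤ (Ioc 0 (2 * ε)).indicator (fun _ => 4 * ε * J) r := by
    intro r hr
    replace hr : (0:ℝ) < r := hr
    by_cases h2 : 2 * ε ≤ r
    · -- no contribution
      have hs2 : (2:ℝ) ≤ r / ε := (le_div_iff₀ hε).2 (by linarith)
      have hβr : β (r / ε) = r / ε := hβid _ hs2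
      have hφ0 : φ r = 0 := by
        rw [hφdef]
        simp only [hβr, mul_div_cancel₀ _ hε.ne', sub_self]
        norm_num
      rw [hφ0, mul_zero]
      exact indicator_nonneg (fun _ _ => by positivity) r
    · push_neg at h2
      have hrmem : r ∈ Ioc 0 (2 * ε) := ⟨hr, h2.le⟩
      rw [indicator_of_mem hrmem]
      set a : ℝ := ε * β (r / ε) with hadef
      rcases le_or_gt r ε with hrε | hεr
      · -- case r ≤ ε : a = ε
        have hβr : β (r / ε) = 1 :=
          hβone _ ⟨div_nonneg hr.le hε.le, (div_le_one hε).2 hrε⟩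
        have haε : a = ε := by rw [hadef, hβr, mul_one]
        set K : ℝ := ∫ t in Ioc r ε, deriv g t ^ 2 with hKdef
        have hK0 : 0 ≤ K := setIntegral_nonneg measurableSet_Ioc fun t _ => sq_nonneg _
        have hcs : φ r ≤ (ε - r) * K := by
          rw [hφdef]
          simp only
          rw [hβr, mul_one, hftc r ε hrε]
          exact aux_cs (deriv g) hrε hg'cont
        have hK2 : r ^ 2 * K ≤ J := by
          have h1 : ∫ t in Ioc r ε, r ^ 2 * deriv g t ^ 2 = r ^ 2 * K :=
            integral_const_mul _ _
          have h2' : ∫ t in Ioc r ε, r ^ 2 * deriv g t ^ 2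
              ≤ ∫ t in Ioc r ε, t ^ 2 * deriv g t ^ 2 := by
            refine setIntegral_mono_on ((hg'cont.pow 2).integrableOn_Ioc.const_mul _)
              hd2cont.integrableOn_Ioc measurableSet_Ioc ?_
            intro t ht
            have : r ≤ t := ht.1.le
            have h3 : r ^ 2 ≤ t ^ 2 := by nlinarith
            exact mul_le_mul_of_nonneg_right h3 (sq_nonneg _)
          have h4 : ∫ t in Ioc r ε, t ^ 2 * deriv g t ^ 2 ≤ J := by
            rw [hJdef]
            refine setIntegral_mono_set hd2cont.integrableOn_Ioc ?_ ?_
            · exact Eventually.of_forall fun t => mul_nonneg (sq_nonneg _) (sq_nonneg _)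
            · exact HasSubset.Subset.eventuallyLE (Ioc_subset_Ioc hr.le (by linarith))
          linarith
        calc r ^ 2 * φ r ≤ r ^ 2 * ((ε - r) * K) := by
              exact mul_le_mul_of_nonneg_left hcs (sq_nonneg r)
          _ ≤ ε * (r ^ 2 * K) := by nlinarith [mul_nonneg (pow_nonneg hr.le 3) hK0]
          _ ≤ ε * J := mul_le_mul_of_nonneg_left hK2 hε.le
          _ ≤ 4 * ε * J := by nlinarith
      · -- case ε < r < 2ε
        have hsmem : r / ε ∈ Ioo (1:ℝ) 2 :=
          ⟨(one_lt_div hε).2 hεr, (div_lt_iff₀ hε).2 (by linarith)⟩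
        have hεa : ε ≤ a := by
          have h1 : (1:ℝ) ≤ β (r / ε) := hβ0 _ (div_nonneg (by linarith) hε.le)
          calc ε = ε * 1 := (mul_one ε).symm
            _ ≤ ε * β (r / ε) := by nlinarith
        have har : a ≤ r := by
          have h1 : β (r / ε) < r / ε := hβlt _ hsmem
          have := (mul_lt_mul_iff_right₀ hε).2 h1
          rw [mul_div_cancel₀ _ hε.ne'] at this
          exact this.le
        set K : ℝ := ∫ t in Ioc a r, deriv g t ^ 2 with hKdef
        have hK0 : 0 ≤ K := setIntegral_nonneg measurableSet_Ioc fun t _ => sq_nonneg _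
        have hcs : φ r ≤ (r - a) * K := by
          rw [hφdef]
          simp only
          rw [show (g a - g r) ^ 2 = (g r - g a) ^ 2 by ring, hftc a r har]
          exact aux_cs (deriv g) har hg'cont
        have hK2 : r ^ 2 * K ≤ 4 * J := by
          have h1 : ∫ t in Ioc a r, r ^ 2 * deriv g t ^ 2 = r ^ 2 * K :=
            integral_const_mul _ _
          have h2' : ∫ t in Ioc a r, r ^ 2 * deriv g t ^ 2
              ≤ ∫ t in Ioc a r, 4 * (t ^ 2 * deriv g t ^ 2) := by
            refine setIntegral_mono_on ((hg'cont.pow 2).integrableOn_Ioc.const_mul _)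
              (hd2cont.integrableOn_Ioc.const_mul _) measurableSet_Ioc ?_
            intro t ht
            have h5 : ε ≤ t := le_trans hεa ht.1.le
            have h3 : r ^ 2 ≤ 4 * t ^ 2 := by nlinarith
            nlinarith [sq_nonneg (deriv g t)]
          have h4 : ∫ t in Ioc a r, 4 * (t ^ 2 * deriv g t ^ 2) ≤ 4 * J := by
            rw [integral_const_mul, hJdef]
            have h6 : ∫ t in Ioc a r, t ^ 2 * deriv g t ^ 2
                ≤ ∫ t in Ioc 0 (2 * ε), t ^ 2 * deriv g t ^ 2 := by
              refine setIntegral_mono_set hd2cont.integrableOn_Ioc ?_ ?_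
              · exact Eventually.of_forall fun t => mul_nonneg (sq_nonneg _) (sq_nonneg _)
              · exact HasSubset.Subset.eventuallyLE
                  (Ioc_subset_Ioc (by linarith) (by linarith))
            linarith
          linarith
        calc r ^ 2 * φ r ≤ r ^ 2 * ((r - a) * K) :=
              mul_le_mul_of_nonneg_left hcs (sq_nonneg r)
          _ ≤ ε * (r ^ 2 * K) := by
              nlinarith [mul_nonneg (mul_nonneg (sub_nonneg.2 h2.le) (sq_nonneg r)) hK0,
                mul_nonneg (mul_nonneg (sub_nonneg.2 hεa) (sq_nonneg r)) hK0]
          _ ≤ ε * (4 * J) := mul_le_mul_of_nonneg_left hK2 hε.le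
          _ = 4 * ε * J := by ring
  -- rewrite the LHS as an integral of a radial function
  have hLHS : (∫ x : E3, (fb (ε * β (‖x‖ / ε)) - Fb x) ^ 2) = ∫ x : E3, φ ‖x‖ := by
    congr 1
    funext x
    simp only [hφdef]
    have h1 : (0:ℝ) ≤ ε * β (‖x‖ / ε) :=
      mul_nonneg hε.le (le_trans zero_le_one (hβ0 _ (div_nonneg (norm_nonneg x) hε.le)))
    rw [hgfb _ h1, hgfb _ (norm_nonneg x), hrad]
  set c : ℝ := 3 * (volume (Metric.ball (0:E3) 1)).toReal with hcdef
  have hc0 : 0 ≤ c := by positivity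
  have hpolar1 : ∫ x : E3, φ ‖x‖ = c * ∫ r in Ioi (0:ℝ), r ^ 2 * φ r := aux_polar φ
  -- integrate the pointwise bound
  have hIone : ∫ r in Ioi (0:ℝ), r ^ 2 * φ r ≤ 8 * ε ^ 2 * J := by
    have hint : Integrable ((Ioc 0 (2 * ε)).indicator (fun _ => 4 * ε * J))
        (volume.restrict (Ioi (0:ℝ))) := by
      rw [integrable_indicator_iff measurableSet_Ioc]
      refine integrableOn_const (ne_of_lt ?_)
      calc (volume.restrict (Ioi (0:ℝ))) (Ioc 0 (2 * ε))
          ≤ volume (Ioc 0 (2 * ε)) := Measure.restrict_le_self _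
        _ < ⊤ := by rw [Real.volume_Ioc]; exact ENNReal.ofReal_lt_top
    have h1 : ∫ r in Ioi (0:ℝ), r ^ 2 * φ r
        ≤ ∫ r in Ioi (0:ℝ), (Ioc 0 (2 * ε)).indicator (fun _ => 4 * ε * J) r := by
      refine integral_mono_of_nonneg ?_ hint ?_
      · refine Eventually.of_forall fun r => mul_nonneg (sq_nonneg _) ?_
        rw [hφdef]; exact sq_nonneg _
      · filter_upwards [ae_restrict_mem measurableSet_Ioi] with r hr using key r hr
    have h2 : ∫ r in Ioi (0:ℝ), (Ioc 0 (2 * ε)).indicator (fun _ => 4 * ε * J) r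
        = 8 * ε ^ 2 * J := by
      rw [setIntegral_indicator measurableSet_Ioc]
      have hset : Ioi (0:ℝ) ∩ Ioc 0 (2 * ε) = Ioc 0 (2 * ε) :=
        inter_eq_self_of_subset_right fun t ht => ht.1
      rw [hset, setIntegral_const, smul_eq_mul, measureReal_def, Real.volume_Ioc,
        ENNReal.toReal_ofReal (by linarith)]
      ring
    linarith
  -- the RHS controls the radial derivative
  have hgradcont : Continuous (fun x : E3 => ‖gradient Fb x‖ ^ 2) := by
    have h1 : Continuous (fun x : E3 => gradient Fb x) := by
      show Continuous (fun x : E3 => (InnerProductSpace.toDual ℝ E3).symm (fderiv ℝ Fb x))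
      exact (InnerProductSpace.toDual ℝ E3).symm.continuous.comp (hFb.continuous_fderiv (by simp))
    exact h1.norm.pow 2
  have hRint : IntegrableOn (fun x : E3 => ‖gradient Fb x‖ ^ 2)
      (Metric.ball (0:E3) (2 * ε)) :=
    ((hgradcont.continuousOn).integrableOn_compact (isCompact_closedBall _ _)).mono_set
      Metric.ball_subset_closedBall
  have hae0 : ∀ᵐ x : E3 ∂(volume.restrict (Metric.ball (0:E3) (2 * ε))), x ≠ 0 := by
    refine ae_restrict_of_ae ?_
    have hset : {x : E3 | ¬ x ≠ 0} = {0} := by ext y; simp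
    rw [ae_iff, hset]
    exact measure_singleton 0
  have hgdef' : g = fun r : ℝ => Fb (r • (EuclideanSpace.single (0 : Fin 3) (1:ℝ))) := by
    rw [hgdef, hv]
  have hmono2 : ∫ x in Metric.ball (0:E3) (2 * ε), (deriv g ‖x‖) ^ 2
      ≤ ∫ x in Metric.ball (0:E3) (2 * ε), ‖gradient Fb x‖ ^ 2 := by
    refine integral_mono_of_nonneg (Eventually.of_forall fun x => sq_nonneg _) hRint ?_
    filter_upwards [hae0] with x hx
    exact aux_grad Fb fb hFb hrad g hgdef' x hx
  have hball : ∫ x in Metric.ball (0:E3) (2 * ε), (deriv g ‖x‖) ^ 2 = c * J := by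
    set χ : ℝ → ℝ := fun t => if t < 2 * ε then deriv g t ^ 2 else 0 with hχ
    have h1 : ∫ x in Metric.ball (0:E3) (2 * ε), (deriv g ‖x‖) ^ 2 = ∫ x : E3, χ ‖x‖ := by
      rw [← integral_indicator measurableSet_ball]
      congr 1
      funext x
      rw [hχ]
      by_cases hxb : x ∈ Metric.ball (0:E3) (2 * ε)
      · rw [indicator_of_mem hxb]
        simp only [if_pos (mem_ball_zero_iff.1 hxb)]
      · rw [indicator_of_notMem hxb]
        simp only [if_neg fun h => hxb (mem_ball_zero_iff.2 h)]
    have h2 : ∫ r in Ioi (0:ℝ), r ^ 2 * χ r = J := by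
      have hpt : ∀ r : ℝ, r ^ 2 * χ r
          = (Iio (2 * ε)).indicator (fun t => t ^ 2 * deriv g t ^ 2) r := by
        intro r
        rw [hχ]
        by_cases h : r < 2 * ε
        · simp only [if_pos h]
          rw [indicator_of_mem (mem_Iio.mpr h)]
        · simp only [if_neg h]
          rw [indicator_of_notMem (fun hm => h (mem_Iio.mp hm)), mul_zero]
      simp_rw [hpt]
      rw [setIntegral_indicator measurableSet_Iio, hJdef, Ioi_inter_Iio]
      exact setIntegral_congr_set Ioo_ae_eq_Ioc
    rw [h1, aux_polar χ, h2]
  -- conclusion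
  rw [hLHS, hpolar1]
  calc c * ∫ r in Ioi (0:ℝ), r ^ 2 * φ r
      ≤ c * (8 * ε ^ 2 * J) := mul_le_mul_of_nonneg_left hIone hc0
    _ = 8 * ε ^ 2 * (c * J) := by ring
    _ ≤ 8 * ε ^ 2 * ∫ x in Metric.ball (0:E3) (2 * ε), ‖gradient Fb x‖ ^ 2 := by
        rw [← hball]
        exact mul_le_mul_of_nonneg_left hmono2 (by positivity)
end
end

section
/- There is a constant C > 0 (depending only on the fixed cutoff β) such that for every ε > 0 and every radial F̄ ∈ C_c^∞(ℝ³), F̄(x) = f̄(|x|), the Neumann-regularized function F_ε(x) = f̄(ε β(|x|/ε)) satisfies Σ_{i=1}^{3} ‖∂_i F_ε − ∂_i F̄‖²_{L²(ℝ³)} ≤ C ‖∇F̄‖²_{L²(B_{2ε})}. -/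
open MeasureTheory Filter Set
open scoped Topology

noncomputable section

/-- `i`-th partial derivative of `F` at `x`. -/
def pd (F : E3 → ℝ) (x : E3) (i : Fin 3) : ℝ :=
  fderiv ℝ F x (EuclideanSpace.single i 1)


lemma my_hasFDerivAt_norm {x : E3} (hx : x ≠ 0) :
    HasFDerivAt (fun y : E3 => ‖y‖) (‖x‖⁻¹ • innerSL ℝ x) x := by
  have hx' : ‖x‖ ≠ 0 := norm_ne_zero_iff.mpr hx
  have hpos : (0:ℝ) < ‖x‖ ^ 2 := by positivity
  have h1 : HasFDerivAt (fun y : E3 => ‖y‖ ^ 2) ((2:ℕ) • innerSL ℝ x) x :=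
    (hasStrictFDerivAt_norm_sq x).hasFDerivAt
  have h2 : HasDerivAt Real.sqrt (1 / (2 * Real.sqrt (‖x‖^2))) (‖x‖^2) :=
    Real.hasDerivAt_sqrt hpos.ne'
  have h3 := h2.comp_hasFDerivAt x h1
  have h3' : HasFDerivAt (fun y : E3 => ‖y‖)
      ((1 / (2 * Real.sqrt (‖x‖ ^ 2))) • (2:ℕ) • (innerSL ℝ) x) x := by
    refine h3.congr_of_eventuallyEq (Eventually.of_forall fun y => ?_)
    simp [Function.comp, Real.sqrt_sq (norm_nonneg y)]
  convert h3' using 1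
  rw [Real.sqrt_sq (norm_nonneg x)]
  ext y
  simp only [ContinuousLinearMap.smul_apply, smul_eq_mul, ContinuousLinearMap.coe_smul',
    Pi.smul_apply, nsmul_eq_mul, Nat.cast_ofNat]
  field_simp

lemma radial_hasGradientAt {q : ℝ → ℝ} {x : E3} (hx : x ≠ 0) {d : ℝ}
    (hq : HasDerivAt q d ‖x‖) :
    HasGradientAt (fun y : E3 => q ‖y‖) ((d * ‖x‖⁻¹) • x) x := by
  have h := hq.comp_hasFDerivAt x (my_hasFDerivAt_norm hx)
  rw [hasGradientAt_iff_hasFDerivAt]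
  convert h using 1
  ext y
  simp only [InnerProductSpace.toDual_apply_apply, ContinuousLinearMap.smul_apply,
    innerSL_apply_apply, real_inner_smul_left, smul_eq_mul]
  case e'_11 => rfl
  ext y
  simp [InnerProductSpace.toDual_apply_apply, real_inner_smul_left]
  ring

lemma norm_radial_grad {d : ℝ} {x : E3} (hx : x ≠ 0) : ‖(d * ‖x‖⁻¹) • x‖ = |d| := by
  have hx' : ‖x‖ ≠ 0 := norm_ne_zero_iff.mpr hx
  rw [norm_smul, Real.norm_eq_abs, abs_mul, abs_inv, abs_norm]
  field_simp

lemma sum_sq_eq_norm_sq (v : E3) : ∑ i : Fin 3, (v i)^2 = ‖v‖^2 := by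
  rw [← real_inner_self_eq_norm_sq, PiLp.inner_apply]
  simp [sq]


lemma pd_eq_of_hasGradientAt {f : E3 → ℝ} {v : E3} {x : E3} (h : HasGradientAt f v x)
    (i : Fin 3) : pd f x i = v i := by
  rw [pd, (hasGradientAt_iff_hasFDerivAt.mp h).fderiv]
  simp [InnerProductSpace.toDual_apply_apply, EuclideanSpace.inner_single_right, real_inner_comm]

section Beta
variable {β : ℝ → ℝ}

lemma beta_contDiffAt (hβC2 : ContDiffOn ℝ 2 β (Set.Ici 0)) {s : ℝ} (hs : 0 < s) :
    ContDiffAt ℝ 2 β s :=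
  hβC2.contDiffAt (Ici_mem_nhds hs)

lemma beta_diffAt (hβC2 : ContDiffOn ℝ 2 β (Set.Ici 0)) {s : ℝ} (hs : 0 < s) :
    DifferentiableAt ℝ β s :=
  (beta_contDiffAt hβC2 hs).differentiableAt two_ne_zero

lemma beta_deriv_contOn (hβC2 : ContDiffOn ℝ 2 β (Set.Ici 0)) :
    ContinuousOn (deriv β) (Set.Ioi 0) := by
  have h1 : ContDiffOn ℝ 2 β (Set.Ioi 0) := hβC2.mono Ioi_subset_Ici_self
  have h2 := h1.continuousOn_derivWithin (isOpen_Ioi.uniqueDiffOn) one_le_two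
  refine h2.congr fun s hs => ?_
  exact (derivWithin_of_isOpen isOpen_Ioi hs).symm

lemma beta_deriv_nonneg (hβC2 : ContDiffOn ℝ 2 β (Set.Ici 0))
    (hβmono : MonotoneOn β (Set.Ici 0)) {s : ℝ} (hs : 0 < s) :
    0 ≤ deriv β s := by
  have hd : HasDerivWithinAt β (deriv β s) (Set.Ioi s) s :=
    ((beta_diffAt hβC2 hs).hasDerivAt).hasDerivWithinAt
  rw [hasDerivWithinAt_iff_tendsto_slope] at hd
  have hsub : Set.Ioi s \ {s} = Set.Ioi s := by
    ext t; simp (config := {contextual := true}) [lt_irrefl, ne_of_gt]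
  rw [hsub] at hd
  refine ge_of_tendsto hd ?_
  filter_upwards [self_mem_nhdsWithin] with t (ht : s < t)
  rw [slope_def_field]
  have h1 : β s ≤ β t := hβmono hs.le (hs.trans ht).le ht.le
  have h2 : 0 < t - s := sub_pos.mpr ht
  rw [div_eq_mul_inv]
  exact mul_nonneg (sub_nonneg.mpr h1) (inv_nonneg.mpr h2.le)

lemma beta_deriv_zero (hβone : ∀ s ∈ Set.Icc (0:ℝ) 1, β s = 1) {s : ℝ}
    (hs : s ∈ Set.Ioo (0:ℝ) 1) : deriv β s = 0 := by
  have h : β =ᶠ[nhds s] fun _ => 1 := by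
    filter_upwards [Ioo_mem_nhds hs.1 hs.2] with t ht
    exact hβone t ⟨ht.1.le, ht.2.le⟩
  rw [h.deriv_eq, deriv_const]

set_option maxHeartbeats 2000000 in
/-- First-derivative `L²(ℝ³)` estimate for the Neumann regularization: there is a
constant `C > 0` (depending only on the fixed cutoff `β`) such that for every `ε > 0`
and every radial `F̄ ∈ C_c^∞(ℝ³)`, `F̄(x) = f̄(‖x‖)`, the function `F_ε(x) = f̄(ε β(‖x‖/ε))`
satisfies `Σᵢ ‖∂ᵢF_ε − ∂ᵢF̄‖²_{L²(ℝ³)} ≤ C ‖∇F̄‖²_{L²(B_{2ε})}`. -/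
theorem neumann_data_gradient_estimate
    (β : ℝ → ℝ) (C₀ : ℝ) (hC₀ : 0 < C₀)
    (hβC2 : ContDiffOn ℝ 2 β (Set.Ici 0))
    (hβmono : MonotoneOn β (Set.Ici 0))
    (hβone : ∀ s ∈ Set.Icc (0:ℝ) 1, β s = 1)
    (hβid : ∀ s : ℝ, 2 ≤ s → β s = s)
    (hβlt : ∀ s ∈ Set.Ioo (1:ℝ) 2, β s < s)
    (hβ' : ∀ s ∈ Set.Ioo (1:ℝ) 2, 0 < deriv β s)
    (hβ'' : ∀ s ∈ Set.Ioo (1:ℝ) 2, |deriv (deriv β) s| ≤ C₀ * deriv β s) :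
    ∃ C > 0, ∀ ε > 0, ∀ (Fb : E3 → ℝ) (fb : ℝ → ℝ),
      ContDiff ℝ (⊤ : ℕ∞) Fb → HasCompactSupport Fb → (∀ x : E3, Fb x = fb ‖x‖) →
      (∑ i : Fin 3, ∫ x : E3,
          (pd (fun y : E3 => fb (ε * β (‖y‖ / ε))) x i - pd Fb x i) ^ 2)
        ≤ C * ∫ x in Metric.ball (0:E3) (2 * ε), ‖gradient Fb x‖ ^ 2 := by
  -- bound on deriv β on [1,2]
  obtain ⟨B0, hB0⟩ : ∃ B0, ∀ s ∈ Set.Icc (1:ℝ) 2, deriv β s ≤ B0 := by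
    obtain ⟨B0, hB0⟩ := (isCompact_Icc (a := (1:ℝ)) (b := 2)).exists_bound_of_continuousOn
      ((beta_deriv_contOn hβC2).mono (fun s hs => lt_of_lt_of_le one_pos hs.1))
    exact ⟨B0, fun s hs => (le_abs_self _).trans ((Real.norm_eq_abs _ ▸ hB0 s hs))⟩
  set B1 : ℝ := max B0 1 with hB1def
  have hB1pos : (0:ℝ) < B1 := lt_of_lt_of_le one_pos (le_max_right _ _)
  have hB1 : ∀ s ∈ Set.Icc (1:ℝ) 2, deriv β s ≤ B1 :=
    fun s hs => (hB0 s hs).trans (le_max_left _ _)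
  refine ⟨8 * B1 + 2, by positivity, ?_⟩
  intro ε hε Fb fb hFb hsupp hrad
  have hεne : ε ≠ 0 := hε.ne'
  -- radial profile and its derivative
  set φ : ℝ → ℝ := fun t => Fb (t • (EuclideanSpace.single 0 1 : E3)) with hφdef
  have hφ : ContDiff ℝ (⊤ : ℕ∞) φ := hFb.comp ((contDiff_id (E := ℝ)).smul contDiff_const)
  set d : ℝ → ℝ := deriv φ with hddef
  have hdcont : Continuous d := hφ.continuous_deriv (by simp)
  have hφfb : ∀ t : ℝ, 0 ≤ t → φ t = fb t := by
    intro t ht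
    have : ‖t • (EuclideanSpace.single 0 1 : E3)‖ = t := by
      rw [norm_smul, EuclideanSpace.norm_single, Real.norm_eq_abs, abs_of_nonneg ht,
        norm_one, mul_one]
    rw [hφdef]; simp only []; rw [hrad, this]
  have hfb : ∀ t : ℝ, 0 < t → HasDerivAt fb (d t) t := by
    intro t ht
    have h1 : HasDerivAt φ (d t) t := (hφ.differentiable (by simp) t).hasDerivAt
    refine h1.congr_of_eventuallyEq ?_
    filter_upwards [Ioi_mem_nhds ht] with u (hu : u ∈ Set.Ioi (0:ℝ))
    exact (hφfb u (le_of_lt hu)).symm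
  have hdfb : ∀ t : ℝ, 0 < t → deriv fb t = d t := fun t ht => (hfb t ht).deriv
  -- the compression map
  set h : ℝ → ℝ := fun r => ε * β (r / ε) with hhdef
  have hβge1 : ∀ s : ℝ, 0 ≤ s → 1 ≤ β s := by
    intro s hs
    have := hβmono (Set.mem_Ici.mpr (le_refl 0)) (Set.mem_Ici.mpr hs) hs
    rwa [hβone 0 ⟨le_refl 0, zero_le_one⟩] at this
  have hhge : ∀ r : ℝ, 0 ≤ r → ε ≤ h r := by
    intro r hr
    have : 1 ≤ β (r / ε) := hβge1 _ (div_nonneg hr hε.le)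
    calc ε = ε * 1 := (mul_one ε).symm
    _ ≤ ε * β (r / ε) := by nlinarith
  have hhderiv : ∀ r : ℝ, 0 < r → HasDerivAt h (deriv β (r / ε)) r := by
    intro r hr
    have h1 : HasDerivAt (fun r : ℝ => r / ε) (1 / ε) r := by
      simpa using (hasDerivAt_id r).div_const ε
    have h2 : HasDerivAt β (deriv β (r / ε)) (r / ε) :=
      (beta_diffAt hβC2 (div_pos hr hε)).hasDerivAt
    have h3 := (h2.comp r h1).const_mul ε
    convert h3 using 1
    case e'_4 => rfl
    case e'_5 => rfl
    case e'_8 => rfl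
    field_simp
  have hhεw : h ε = ε := by
    rw [hhdef]; simp only []
    rw [div_self hεne, hβone 1 ⟨zero_le_one, le_refl 1⟩, mul_one]
  have hh2ε : h (2 * ε) = 2 * ε := by
    rw [hhdef]; simp only []
    rw [mul_div_assoc, div_self hεne, mul_one, hβid 2 (le_refl 2)]; ring
  -- the regularized function and its gradient field
  set G : E3 → ℝ := fun y => fb (ε * β (‖y‖ / ε)) with hGdef
  set W : E3 → E3 := fun x => ((d (h ‖x‖) * deriv β (‖x‖ / ε)) * ‖x‖⁻¹) • x with hWdef
  have hWgrad : ∀ x : E3, HasGradientAt G (W x) x := by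
    intro x
    rcases lt_or_ge ‖x‖ ε with hx | hx
    · -- locally constant
      have hloc : G =ᶠ[nhds x] fun _ => fb ε := by
        filter_upwards [Metric.ball_mem_nhds x (show (0:ℝ) < ε - ‖x‖ by linarith)] with y hy
        rw [Metric.mem_ball, dist_eq_norm] at hy
        have hyε : ‖y‖ < ε := by
          have := norm_add_le (y - x) x
          rw [sub_add_cancel] at this
          linarith
        have : β (‖y‖ / ε) = 1 := hβone _ ⟨div_nonneg (norm_nonneg y) hε.le,
          (div_le_one hε).mpr hyε.le⟩
        rw [hGdef]; simp only []
        rw [this, mul_one]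
      have hzero : HasGradientAt G 0 x :=
        (hasGradientAt_const x (fb ε)).congr_of_eventuallyEq hloc
      have hW0 : W x = 0 := by
        rcases eq_or_ne x 0 with h0 | h0
        · rw [hWdef]; simp [h0]
        · have hn : 0 < ‖x‖ := norm_pos_iff.mpr h0
          have : deriv β (‖x‖ / ε) = 0 :=
            beta_deriv_zero hβone ⟨div_pos hn hε, (div_lt_one hε).mpr hx⟩
          rw [hWdef]; simp [this]
      rwa [hW0]
    · have hxne : x ≠ 0 := by
        intro h0; rw [h0, norm_zero] at hx; exact absurd hx (not_le.mpr hε)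
      have hr : 0 < ‖x‖ := lt_of_lt_of_le hε hx
      have hq : HasDerivAt (fun r => fb (h r)) (d (h ‖x‖) * deriv β (‖x‖ / ε)) ‖x‖ :=
        (hfb (h ‖x‖) (lt_of_lt_of_le hε (hhge _ hr.le))).comp ‖x‖ (hhderiv ‖x‖ hr)
      exact radial_hasGradientAt hxne hq
  have hFbφ : Fb = fun y : E3 => φ ‖y‖ := by
    funext y; rw [hrad y, hφfb ‖y‖ (norm_nonneg y)]
  have hFbgrad : ∀ x : E3, x ≠ 0 → HasGradientAt Fb ((d ‖x‖ * ‖x‖⁻¹) • x) x := by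
    intro x hx
    rw [hFbφ]
    exact radial_hasGradientAt hx ((hφ.differentiable (by simp) ‖x‖).hasDerivAt)
  have hgradFb : ∀ x : E3, x ≠ 0 → gradient Fb x = (d ‖x‖ * ‖x‖⁻¹) • x :=
    fun x hx => (hFbgrad x hx).gradient
  -- outside the ball of radius 2ε the two gradients agree
  have hWeq : ∀ x : E3, 2 * ε < ‖x‖ → W x = gradient Fb x := by
    intro x hx
    have hxne : x ≠ 0 := by
      intro h0; rw [h0, norm_zero] at hx; nlinarith
    have hGF : G =ᶠ[nhds x] Fb := by
      have hop : IsOpen {y : E3 | 2 * ε < ‖y‖} := isOpen_lt continuous_const continuous_norm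
      filter_upwards [hop.mem_nhds hx] with y (hy : 2 * ε < ‖y‖)
      have h2 : (2:ℝ) ≤ ‖y‖ / ε := by rw [le_div_iff₀ hε]; linarith
      rw [hGdef]; simp only []
      rw [hβid _ h2, hrad y]
      congr 1
      field_simp
    have h1 : HasGradientAt Fb (W x) x := (hWgrad x).congr_of_eventuallyEq hGF.symm
    exact (h1.gradient).symm.trans (rfl)
  -- continuity of the two gradient fields
  have hgradFbcont : Continuous (gradient Fb) := by
    have h1 : Continuous (fderiv ℝ Fb) := hFb.continuous_fderiv (by simp)
    have h2 : Continuous fun x : E3 => (InnerProductSpace.toDual ℝ E3).symm (fderiv ℝ Fb x) :=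
      (InnerProductSpace.toDual ℝ E3).symm.continuous.comp h1
    exact h2
  have hWcont : Continuous W := by
    rw [continuous_iff_continuousAt]
    intro x
    rcases lt_or_ge ‖x‖ ε with hx | hx
    · -- W vanishes near x
      have hloc : W =ᶠ[nhds x] fun _ => 0 := by
        filter_upwards [Metric.ball_mem_nhds x (show (0:ℝ) < ε - ‖x‖ by linarith)] with y hy
        rw [Metric.mem_ball, dist_eq_norm] at hy
        have hyε : ‖y‖ < ε := by
          have := norm_add_le (y - x) x
          rw [sub_add_cancel] at this
          linarith
        rcases eq_or_ne y 0 with h0 | h0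
        · rw [hWdef]; simp [h0]
        · have hn : 0 < ‖y‖ := norm_pos_iff.mpr h0
          have : deriv β (‖y‖ / ε) = 0 :=
            beta_deriv_zero hβone ⟨div_pos hn hε, (div_lt_one hε).mpr hyε⟩
          rw [hWdef]; simp [this]
      exact hloc.continuousAt
    · have hr : 0 < ‖x‖ := lt_of_lt_of_le hε hx
      have hxne : x ≠ 0 := norm_pos_iff.mp hr
      have hUopen : IsOpen {y : E3 | ε / 2 < ‖y‖} := isOpen_lt continuous_const continuous_norm
      have hUx : {y : E3 | ε / 2 < ‖y‖} ∈ nhds x := hUopen.mem_nhds (by simp only [Set.mem_setOf_eq]; linarith)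
      have hconton : ContinuousOn W {y : E3 | ε / 2 < ‖y‖} := by
        intro y hy
        have hyn : 0 < ‖y‖ := lt_trans (by linarith) hy
        have hyne : y ≠ 0 := norm_pos_iff.mp hyn
        have c1 : ContinuousAt (fun y : E3 => d (h ‖y‖)) y := by
          have : ContinuousAt h ‖y‖ := by
            have : ContinuousAt β (‖y‖ / ε) :=
              (beta_contDiffAt hβC2 (div_pos hyn hε)).continuousAt
            exact (continuousAt_const.mul (ContinuousAt.comp (g := β) (f := fun r : ℝ => r / ε) this ((continuous_id.div_const ε).continuousAt)))
          exact ContinuousAt.comp (g := d) hdcont.continuousAt (ContinuousAt.comp (g := h) (f := fun y : E3 => ‖y‖) this continuous_norm.continuousAt)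
        have c2 : ContinuousAt (fun y : E3 => deriv β (‖y‖ / ε)) y := by
          have hmem : Set.Ioi (0:ℝ) ∈ nhds (‖y‖ / ε) := Ioi_mem_nhds (div_pos hyn hε)
          have : ContinuousAt (deriv β) (‖y‖ / ε) :=
            (beta_deriv_contOn hβC2).continuousAt hmem
          exact ContinuousAt.comp (g := deriv β) (f := fun y : E3 => ‖y‖ / ε) this ((continuous_norm.div_const ε).continuousAt)
        have c3 : ContinuousAt (fun y : E3 => ‖y‖⁻¹) y :=
          ContinuousAt.comp (g := Inv.inv) (f := fun y : E3 => ‖y‖) (continuousAt_inv₀ hyn.ne') continuous_norm.continuousAt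
        exact (((c1.mul c2).mul c3).smul continuousAt_id).continuousWithinAt
      exact hconton.continuousAt hUx
  -- pointwise identification of the statement's integrand
  have hpdG : ∀ (x : E3) (i : Fin 3), pd G x i = W x i :=
    fun x i => pd_eq_of_hasGradientAt (hWgrad x) i
  have hpdFb : ∀ (x : E3) (i : Fin 3), pd Fb x i = gradient Fb x i :=
    fun x i => pd_eq_of_hasGradientAt ((hFb.differentiable (by simp) x).hasGradientAt) i
  set g : E3 → ℝ := fun x => ‖W x - gradient Fb x‖ ^ 2 with hgdef
  have hvanish : ∀ x : E3, x ∉ Metric.closedBall (0:E3) (2*ε) → W x - gradient Fb x = 0 := by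
    intro x hx
    rw [Metric.mem_closedBall, dist_zero_right, not_le] at hx
    rw [hWeq x hx, sub_self]
  have hcomp_cont : ∀ i : Fin 3, Continuous fun x : E3 => ((W x - gradient Fb x) i)^2 := by
    intro i
    have h1 : Continuous fun x : E3 => W x - gradient Fb x := hWcont.sub hgradFbcont
    have h2 : Continuous fun v : E3 => v i := PiLp.continuous_apply 2 (fun _ : Fin 3 => ℝ) i
    exact (h2.comp h1).pow 2
  have hint_i : ∀ i : Fin 3, Integrable (fun x : E3 => ((W x - gradient Fb x) i)^2) := by
    intro i
    refine Continuous.integrable_of_hasCompactSupport (hcomp_cont i) ?_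
    refine HasCompactSupport.intro (isCompact_closedBall (0:E3) (2*ε)) ?_
    intro x hx
    rw [hvanish x hx]
    simp
  have hLHS1 : (∑ i : Fin 3, ∫ x : E3, (pd G x i - pd Fb x i) ^ 2) = ∫ x : E3, g x := by
    have heq : ∀ i : Fin 3, (fun x : E3 => (pd G x i - pd Fb x i) ^ 2)
        = fun x : E3 => ((W x - gradient Fb x) i)^2 := by
      intro i; funext x
      rw [hpdG, hpdFb]
      congr 1
    calc (∑ i : Fin 3, ∫ x : E3, (pd G x i - pd Fb x i) ^ 2)
        = ∑ i : Fin 3, ∫ x : E3, ((W x - gradient Fb x) i)^2 := by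
          exact Finset.sum_congr rfl fun i _ => by rw [heq i]
    _ = ∫ x : E3, ∑ i : Fin 3, ((W x - gradient Fb x) i)^2 :=
        (integral_finset_sum _ fun i _ => hint_i i).symm
    _ = ∫ x : E3, g x := by
        refine integral_congr_ae (Eventually.of_forall fun x => ?_)
        exact sum_sq_eq_norm_sq _
  have hballae : (Metric.closedBall (0:E3) (2*ε) : Set E3) =ᵐ[volume] Metric.ball (0:E3) (2*ε) := by
    rw [MeasureTheory.ae_eq_set]
    constructor
    · rw [Metric.closedBall_diff_ball]
      exact MeasureTheory.Measure.addHaar_sphere volume 0 (2*ε)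
    · rw [Set.diff_eq_empty.mpr Metric.ball_subset_closedBall]
      exact MeasureTheory.measure_empty
  have hLHS2 : ∫ x : E3, g x = ∫ x in Metric.ball (0:E3) (2*ε), g x := by
    rw [← setIntegral_eq_integral_of_forall_compl_eq_zero
      (s := Metric.closedBall (0:E3) (2*ε)) (f := g)
      (fun x hx => by rw [hgdef]; simp only []; rw [hvanish x hx]; simp)]
    exact setIntegral_congr_set hballae
  -- polar coordinate reduction
  have hae0 : ∀ᵐ x : E3 ∂volume, x ≠ 0 := by
    rw [MeasureTheory.ae_iff]
    simpa using (by simp : (volume : Measure E3) {0} = 0)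
  set V : ℝ := (volume (Metric.ball (0:E3) 1)).toReal with hVdef
  have hVnn : 0 ≤ V := ENNReal.toReal_nonneg
  have key : ∀ (v : E3 → ℝ) (f : ℝ → ℝ),
      (∀ x : E3, x ≠ 0 → (Metric.ball (0:E3) (2*ε)).indicator v x = f ‖x‖) →
      ∫ x in Metric.ball (0:E3) (2*ε), v x = (3:ℝ) * V * ∫ r in Set.Ioi (0:ℝ), r ^ 2 * f r := by
    intro v f hvf
    rw [← MeasureTheory.integral_indicator measurableSet_ball]
    rw [integral_congr_ae ((hae0.mono) fun x hx => hvf x hx)]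
    have := MeasureTheory.integral_fun_norm_addHaar (volume : Measure E3) f
    simp only [finrank_euclideanSpace_fin, smul_eq_mul, nsmul_eq_mul] at this
    rw [this]
    norm_num [mul_assoc]
    exact Or.inl rfl
  set fG : ℝ → ℝ := Set.indicator (Set.Iio (2*ε)) (fun r => (d (h r) * deriv β (r / ε))^2) with hfGdef
  set fF : ℝ → ℝ := Set.indicator (Set.Iio (2*ε)) (fun r => (d r)^2) with hfFdef
  have hWnorm : ∀ x : E3, x ≠ 0 → ‖W x‖^2 = (d (h ‖x‖) * deriv β (‖x‖ / ε))^2 := by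
    intro x hx
    rw [hWdef]; simp only []
    rw [norm_radial_grad hx, sq_abs]
  have hFbnorm : ∀ x : E3, x ≠ 0 → ‖gradient Fb x‖^2 = (d ‖x‖)^2 := by
    intro x hx
    rw [hgradFb x hx]
    have := norm_radial_grad (d := d ‖x‖) hx
    rw [this, sq_abs]
  have hPG : ∫ x in Metric.ball (0:E3) (2*ε), ‖W x‖^2
      = (3:ℝ) * V * ∫ r in Set.Ioi (0:ℝ), r ^ 2 * fG r := by
    refine key _ _ fun x hx => ?_
    rcases lt_or_ge ‖x‖ (2*ε) with hlt | hge
    · rw [Set.indicator_of_mem (by simpa [Metric.mem_ball, dist_zero_right] using hlt),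
        hfGdef, Set.indicator_of_mem (Set.mem_Iio.mpr hlt)]
      exact hWnorm x hx
    · rw [Set.indicator_of_notMem (by simp [Metric.mem_ball, dist_zero_right, not_lt.mpr hge]),
        hfGdef, Set.indicator_of_notMem (by simpa using not_lt.mpr hge)]
  have hPF : ∫ x in Metric.ball (0:E3) (2*ε), ‖gradient Fb x‖^2
      = (3:ℝ) * V * ∫ r in Set.Ioi (0:ℝ), r ^ 2 * fF r := by
    refine key _ _ fun x hx => ?_
    rcases lt_or_ge ‖x‖ (2*ε) with hlt | hge
    · rw [Set.indicator_of_mem (by simpa [Metric.mem_ball, dist_zero_right] using hlt),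
        hfFdef, Set.indicator_of_mem (Set.mem_Iio.mpr hlt)]
      exact hFbnorm x hx
    · rw [Set.indicator_of_notMem (by simp [Metric.mem_ball, dist_zero_right, not_lt.mpr hge]),
        hfFdef, Set.indicator_of_notMem (by simpa using not_lt.mpr hge)]
  have hεle : ε ≤ 2 * ε := by linarith
  -- continuity facts on [ε, 2ε]
  have hβ'contOn : ContinuousOn (fun r : ℝ => deriv β (r / ε)) (Set.Icc ε (2*ε)) := by
    refine (beta_deriv_contOn hβC2).comp (continuousOn_id.div_const ε) ?_
    intro r hr
    exact Set.mem_Ioi.mpr (div_pos (lt_of_lt_of_le hε hr.1) hε)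
  have hhcontOn : ContinuousOn h (Set.Icc ε (2*ε)) := by
    refine continuousOn_const.mul (hβC2.continuousOn.comp (continuousOn_id.div_const ε) ?_)
    intro r hr
    exact Set.mem_Ici.mpr (div_nonneg (le_trans hε.le hr.1) hε.le)
  -- Step A : IG as an interval integral
  have hStepA : (∫ r in Set.Ioi (0:ℝ), r ^ 2 * fG r)
      = ∫ r in ε..(2*ε), r ^ 2 * (d (h r) * deriv β (r / ε))^2 := by
    have a1 : ∀ r ∈ Set.Ioi (0:ℝ), r ^ 2 * fG r
        = (Set.Ico ε (2*ε)).indicator (fun r => r ^ 2 * (d (h r) * deriv β (r / ε))^2) r := by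
      intro r hr
      rcases lt_or_ge r ε with h1 | h1
      · rw [Set.indicator_of_notMem (by simp [Set.mem_Ico, not_le.mpr h1, not_and_or])]
        have hd0 : deriv β (r / ε) = 0 :=
          beta_deriv_zero hβone ⟨div_pos hr hε, (div_lt_one hε).mpr h1⟩
        rw [hfGdef, Set.indicator_of_mem (Set.mem_Iio.mpr (by linarith)), hd0]
        ring
      · rcases lt_or_ge r (2*ε) with h2 | h2
        · rw [Set.indicator_of_mem (Set.mem_Ico.mpr ⟨h1, h2⟩), hfGdef,
            Set.indicator_of_mem (Set.mem_Iio.mpr h2)]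
        · rw [Set.indicator_of_notMem (by simp [Set.mem_Ico, not_lt.mpr h2]),
            hfGdef, Set.indicator_of_notMem (by simpa using h2)]
          ring
    rw [MeasureTheory.setIntegral_congr_fun measurableSet_Ioi a1,
      MeasureTheory.integral_indicator measurableSet_Ico,
      MeasureTheory.Measure.restrict_restrict measurableSet_Ico,
      Set.inter_eq_self_of_subset_left (fun r hr => Set.mem_Ioi.mpr (lt_of_lt_of_le hε hr.1)),
      MeasureTheory.Measure.restrict_congr_set Ico_ae_eq_Ioc,
      intervalIntegral.integral_of_le hεle]
  -- Step B : pointwise comparison on [ε, 2ε]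
  have hStepB : (∫ r in ε..(2*ε), r ^ 2 * (d (h r) * deriv β (r / ε))^2)
      ≤ ∫ r in ε..(2*ε), deriv β (r / ε) • (4 * B1 * ((h r)^2 * (d (h r))^2)) := by
    have hint1 : IntervalIntegrable
        (fun r => r ^ 2 * (d (h r) * deriv β (r / ε))^2) volume ε (2*ε) := by
      apply ContinuousOn.intervalIntegrable
      rw [Set.uIcc_of_le hεle]
      exact (continuousOn_pow 2).mul
        (((hdcont.comp_continuousOn hhcontOn).mul hβ'contOn).pow 2)
    have hint2 : IntervalIntegrable
        (fun r => deriv β (r / ε) • (4 * B1 * ((h r)^2 * (d (h r))^2))) volume ε (2*ε) := by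
      apply ContinuousOn.intervalIntegrable
      rw [Set.uIcc_of_le hεle]
      exact hβ'contOn.smul (continuousOn_const.mul ((hhcontOn.pow 2).mul
        ((hdcont.comp_continuousOn hhcontOn).pow 2)))
    refine intervalIntegral.integral_mono_on hεle hint1 hint2 fun r hr => ?_
    have hs1 : (1:ℝ) ≤ r / ε := (le_div_iff₀ hε).mpr (by linarith [hr.1])
    have hs2 : r / ε ≤ 2 := (div_le_iff₀ hε).mpr (by linarith [hr.2])
    have hD0 : 0 ≤ deriv β (r / ε) :=
      beta_deriv_nonneg hβC2 hβmono (lt_of_lt_of_le one_pos hs1)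
    have hDB : deriv β (r / ε) ≤ B1 := hB1 _ ⟨hs1, hs2⟩
    have hhr : ε ≤ h r := hhge r (le_trans hε.le hr.1)
    have hr2 : r ≤ 2 * h r := le_trans hr.2 (by linarith)
    have hr0 : 0 ≤ r := le_trans hε.le hr.1
    have hsq : r ^ 2 ≤ 4 * (h r) ^ 2 := by nlinarith
    have hDsq : (deriv β (r / ε)) ^ 2 ≤ B1 * deriv β (r / ε) := by nlinarith
    have hc : (0:ℝ) ≤ (d (h r)) ^ 2 := sq_nonneg _
    rw [smul_eq_mul]
    nlinarith [mul_nonneg hc hD0, sq_nonneg (d (h r) * deriv β (r / ε)),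
      mul_le_mul_of_nonneg_left hDsq hc, mul_nonneg (mul_nonneg hc hD0) (sq_nonneg (h r))]
  -- Step C : substitution u = h r
  have hStepC : (∫ r in ε..(2*ε), deriv β (r / ε) • (4 * B1 * ((h r)^2 * (d (h r))^2)))
      = ∫ u in ε..(2*ε), 4 * B1 * (u^2 * (d u)^2) := by
    have hc1 : ∀ r ∈ Set.uIcc ε (2*ε), HasDerivAt h (deriv β (r / ε)) r := by
      intro r hr
      rw [Set.uIcc_of_le hεle] at hr
      exact hhderiv r (lt_of_lt_of_le hε hr.1)
    have hc2 : ContinuousOn (fun r : ℝ => deriv β (r / ε)) (Set.uIcc ε (2*ε)) := by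
      rw [Set.uIcc_of_le hεle]; exact hβ'contOn
    have hc3 : Continuous (fun u : ℝ => 4 * B1 * (u^2 * (d u)^2)) :=
      continuous_const.mul ((continuous_pow 2).mul (hdcont.pow 2))
    have := intervalIntegral.integral_comp_smul_deriv hc1 hc2 hc3
    rw [hhεw, hh2ε] at this
    simpa [Function.comp] using this
  -- Step D : the interval integral is dominated by IF
  have hStepD : (∫ u in ε..(2*ε), 4 * B1 * (u^2 * (d u)^2))
      ≤ 4 * B1 * ∫ r in Set.Ioi (0:ℝ), r ^ 2 * fF r := by
    rw [intervalIntegral.integral_const_mul]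
    refine mul_le_mul_of_nonneg_left ?_ (by positivity)
    have hbigcont : Continuous (fun u : ℝ => u^2 * (d u)^2) :=
      (continuous_pow 2).mul (hdcont.pow 2)
    have hIntOo : IntegrableOn (fun u : ℝ => u^2 * (d u)^2) (Set.Ioo 0 (2*ε)) volume :=
      (hbigcont.continuousOn.integrableOn_compact
        (isCompact_Icc (a := (0:ℝ)) (b := 2*ε))).mono_set Set.Ioo_subset_Icc_self
    have e1 : (∫ r in Set.Ioi (0:ℝ), r ^ 2 * fF r)
        = ∫ r in Set.Ioo (0:ℝ) (2*ε), r^2 * (d r)^2 := by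
      have a1 : ∀ r ∈ Set.Ioi (0:ℝ), r ^ 2 * fF r
          = (Set.Ioo (0:ℝ) (2*ε)).indicator (fun r => r ^ 2 * (d r)^2) r := by
        intro r hr
        rcases lt_or_ge r (2*ε) with h2 | h2
        · rw [Set.indicator_of_mem (Set.mem_Ioo.mpr ⟨hr, h2⟩), hfFdef,
            Set.indicator_of_mem (Set.mem_Iio.mpr h2)]
        · rw [Set.indicator_of_notMem (by simp [Set.mem_Ioo, not_lt.mpr h2]),
            hfFdef, Set.indicator_of_notMem (by simpa using h2)]
          ring
      rw [MeasureTheory.setIntegral_congr_fun measurableSet_Ioi a1,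
        MeasureTheory.integral_indicator measurableSet_Ioo,
        MeasureTheory.Measure.restrict_restrict measurableSet_Ioo,
        Set.inter_eq_self_of_subset_left (fun r hr => Set.mem_Ioi.mpr hr.1)]
    rw [e1, intervalIntegral.integral_of_le hεle,
      ← MeasureTheory.Measure.restrict_congr_set Ioo_ae_eq_Ioc]
    refine MeasureTheory.setIntegral_mono_set hIntOo
      (Eventually.of_forall fun r => by positivity) ?_
    exact HasSubset.Subset.eventuallyLE (fun r hr => ⟨lt_of_lt_of_le hε hr.1.le, hr.2⟩)
  -- combine the 1D steps
  have hID : (∫ r in Set.Ioi (0:ℝ), r ^ 2 * fG r)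
      ≤ 4 * B1 * ∫ r in Set.Ioi (0:ℝ), r ^ 2 * fF r := by
    rw [hStepA]
    exact hStepB.trans (hStepC.le.trans hStepD)
  set R : ℝ := ∫ x in Metric.ball (0:E3) (2*ε), ‖gradient Fb x‖ ^ 2 with hRdef
  have hRnn : 0 ≤ R := setIntegral_nonneg measurableSet_ball (fun x _ => sq_nonneg _)
  have hA : (∫ x in Metric.ball (0:E3) (2*ε), ‖W x‖^2) ≤ 4 * B1 * R := by
    rw [hPG, hPF]
    calc (3:ℝ) * V * ∫ r in Set.Ioi (0:ℝ), r ^ 2 * fG r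
        ≤ 3 * V * (4 * B1 * ∫ r in Set.Ioi (0:ℝ), r ^ 2 * fF r) :=
          mul_le_mul_of_nonneg_left hID (by positivity)
    _ = 4 * B1 * (3 * V * ∫ r in Set.Ioi (0:ℝ), r ^ 2 * fF r) := by ring
  -- integrability on the ball
  have hIg : IntegrableOn g (Metric.ball (0:E3) (2*ε)) volume := by
    refine Integrable.integrableOn ?_
    refine Continuous.integrable_of_hasCompactSupport
      (((hWcont.sub hgradFbcont).norm).pow 2) ?_
    refine HasCompactSupport.intro (isCompact_closedBall (0:E3) (2*ε)) ?_
    intro x hx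
    rw [hgdef]; simp only []
    rw [hvanish x hx]
    simp
  have hIW : IntegrableOn (fun x : E3 => ‖W x‖^2) (Metric.ball (0:E3) (2*ε)) volume :=
    (((hWcont.norm).pow 2).continuousOn.integrableOn_compact
      (isCompact_closedBall (0:E3) (2*ε))).mono_set Metric.ball_subset_closedBall
  have hIFb : IntegrableOn (fun x : E3 => ‖gradient Fb x‖^2) (Metric.ball (0:E3) (2*ε)) volume :=
    (((hgradFbcont.norm).pow 2).continuousOn.integrableOn_compact
      (isCompact_closedBall (0:E3) (2*ε))).mono_set Metric.ball_subset_closedBall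
  have hsplit : (∫ x in Metric.ball (0:E3) (2*ε), g x)
      ≤ 2 * (∫ x in Metric.ball (0:E3) (2*ε), ‖W x‖^2) + 2 * R := by
    have hple : ∀ x ∈ Metric.ball (0:E3) (2*ε),
        g x ≤ 2 * ‖W x‖^2 + 2 * ‖gradient Fb x‖^2 := by
      intro x _
      rw [hgdef]; simp only []
      have h1 : ‖W x - gradient Fb x‖ ≤ ‖W x‖ + ‖gradient Fb x‖ := norm_sub_le _ _
      have h2 : ‖W x - gradient Fb x‖^2 ≤ (‖W x‖ + ‖gradient Fb x‖)^2 :=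
        pow_le_pow_left₀ (norm_nonneg _) h1 2
      nlinarith [sq_nonneg (‖W x‖ - ‖gradient Fb x‖)]
    calc (∫ x in Metric.ball (0:E3) (2*ε), g x)
        ≤ ∫ x in Metric.ball (0:E3) (2*ε), (2 * ‖W x‖^2 + 2 * ‖gradient Fb x‖^2) := by
          refine setIntegral_mono_on hIg ?_ measurableSet_ball hple
          exact (hIW.const_mul 2).add (hIFb.const_mul 2)
    _ = 2 * (∫ x in Metric.ball (0:E3) (2*ε), ‖W x‖^2) + 2 * R := by
          rw [integral_add (hIW.const_mul 2) (hIFb.const_mul 2),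
            MeasureTheory.integral_const_mul, MeasureTheory.integral_const_mul, hRdef]
  calc (∑ i : Fin 3, ∫ x : E3, (pd G x i - pd Fb x i) ^ 2)
      = ∫ x in Metric.ball (0:E3) (2*ε), g x := hLHS1.trans hLHS2
  _ ≤ 2 * (∫ x in Metric.ball (0:E3) (2*ε), ‖W x‖^2) + 2 * R := hsplit
  _ ≤ 2 * (4 * B1 * R) + 2 * R := by
      have := mul_le_mul_of_nonneg_left hA (by norm_num : (0:ℝ) ≤ 2)
      linarith
  _ = (8 * B1 + 2) * R := by ring
end Beta
end
end

section
/- There is a constant C > 0 such that for every ε > 0 and every radial F̄ ∈ C_c^∞(ℝ³), F̄(x) = f̄(|x|): (1/ε²) ∫_{ε<|x|<2ε} |F̄(x)|² dx ≤ C ε ‖F̄/|x|‖_{L²(ℝ³)} ‖∇F̄/|x|‖_{L²(ℝ³)}, where ‖G/|x|‖²_{L²(ℝ³)} = ∫_{ℝ³} |G(x)|²/|x|² dx. -/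
open MeasureTheory Filter Set
open scoped Topology

set_option maxHeartbeats 4000000
noncomputable section

lemma polar3 (h : ℝ → ℝ) :
    ∫ x : E3, h ‖x‖ = 3 * (volume (Metric.ball (0:E3) 1)).toReal
      * ∫ r in Ioi (0:ℝ), r ^ 2 * h r := by
  have := MeasureTheory.integral_fun_norm_addHaar (volume : Measure E3) h
  rw [this]
  have hd : Module.finrank ℝ E3 = 3 := by simp [finrank_euclideanSpace_fin]
  rw [hd]
  simp only [nsmul_eq_mul, smul_eq_mul]
  simp only [measureReal_def]
  norm_num [mul_assoc]


lemma rpow_half_int (h : ℝ → ℝ) :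
    (∫ t in Ioi (0:ℝ), |h t| ^ (2:ℝ)) ^ ((1:ℝ)/2) = Real.sqrt (∫ t in Ioi (0:ℝ), h t ^ 2) := by
  have e : ∀ t : ℝ, |h t| ^ (2:ℝ) = h t ^ 2 := fun t => by
    rw [show (2:ℝ) = ((2:ℕ):ℝ) by norm_num, Real.rpow_natCast, sq_abs]
  simp only [e]
  rw [Real.sqrt_eq_rpow]

lemma agmon (g : ℝ → ℝ) (hg : ContDiff ℝ (⊤ : ℕ∞) g) (hsupp : HasCompactSupport g)
    {r : ℝ} (hr : 0 < r) :
    g r ^ 2 ≤ 2 * Real.sqrt (∫ t in Ioi (0:ℝ), g t ^ 2)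
      * Real.sqrt (∫ t in Ioi (0:ℝ), (deriv g t) ^ 2) := by
  have hg' : Continuous (deriv g) := hg.continuous_deriv (by simp)
  have hgc : Continuous g := hg.continuous
  have hsupp' : HasCompactSupport (deriv g) := hsupp.deriv
  have hsq : HasCompactSupport (fun t => g t ^ 2) := by
    exact hsupp.comp_left (g := fun y : ℝ => y ^ 2) (by norm_num)
  have hsqC : ContDiff ℝ 1 (fun t => g t ^ 2) := (hg.of_le (by simp)).pow 2
  have key : ∫ t in Ioi r, deriv (fun t => g t ^ 2) t = - (g r ^ 2) :=
    hsq.integral_Ioi_deriv_eq hsqC r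
  have hderiv : ∀ t : ℝ, deriv (fun t => g t ^ 2) t = 2 * g t * deriv g t := by
    intro t
    have h2 : HasDerivAt (fun t => g t ^ 2) (2 * g t * deriv g t) t := by
      have h1 : HasDerivAt g (deriv g t) t :=
        ((hg.differentiable (by simp)) t).hasDerivAt
      have h3 := h1.pow 2
      rw [show g ^ 2 = fun t => g t ^ 2 from rfl] at h3
      simpa [mul_comm, mul_assoc, mul_left_comm] using h3
    exact h2.deriv
  have key2 : g r ^ 2 = - ∫ t in Ioi r, 2 * g t * deriv g t := by
    simp only [← hderiv]
    rw [key, neg_neg]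
  have hint2 : Integrable (fun t => |g t| * |deriv g t|) :=
    (hgc.abs.mul hg'.abs).integrable_of_hasCompactSupport
      ((hsupp.comp_left abs_zero).mul_right)
  have step1 : g r ^ 2 ≤ 2 * ∫ t in Ioi (0:ℝ), |g t| * |deriv g t| := by
    rw [key2]
    have h1 : - ∫ t in Ioi r, 2 * g t * deriv g t ≤ |∫ t in Ioi r, 2 * g t * deriv g t| :=
      neg_le_abs _
    refine h1.trans ?_
    have h2 : |∫ t in Ioi r, 2 * g t * deriv g t| ≤ ∫ t in Ioi r, 2 * (|g t| * |deriv g t|) := by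
      have := norm_integral_le_integral_norm (μ := volume.restrict (Ioi r))
          (f := fun t => 2 * g t * deriv g t)
      simp only [Real.norm_eq_abs] at this
      refine this.trans (le_of_eq (integral_congr_ae (Filter.Eventually.of_forall fun t => ?_)))
      simp [abs_mul, abs_two, mul_assoc]
    refine h2.trans ?_
    have h3 : ∫ t in Ioi r, 2 * (|g t| * |deriv g t|)
        ≤ ∫ t in Ioi (0:ℝ), 2 * (|g t| * |deriv g t|) := by
      apply setIntegral_mono_set
      · exact (hint2.const_mul 2).integrableOn
      · filter_upwards with t
        positivity
      · exact HasSubset.Subset.eventuallyLE (Ioi_subset_Ioi hr.le)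
    refine h3.trans (le_of_eq ?_)
    exact integral_const_mul 2 _
  refine step1.trans ?_
  rw [mul_assoc]
  refine mul_le_mul_of_nonneg_left ?_ (by norm_num)
  have hpq : Real.HolderConjugate 2 2 := Real.HolderConjugate.two_two
  have hmg : MemLp (fun t => |g t|) (ENNReal.ofReal 2) (volume.restrict (Ioi (0:ℝ))) :=
    MemLp.restrict _ (hgc.abs.memLp_of_hasCompactSupport (hsupp.comp_left abs_zero))
  have hmg' : MemLp (fun t => |deriv g t|) (ENNReal.ofReal 2) (volume.restrict (Ioi (0:ℝ))) :=
    MemLp.restrict _ (hg'.abs.memLp_of_hasCompactSupport (hsupp'.comp_left abs_zero))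
  have hH := MeasureTheory.integral_mul_le_Lp_mul_Lq_of_nonneg hpq
    (f := fun t => |g t|) (g := fun t => |deriv g t|)
    (Filter.Eventually.of_forall fun t => abs_nonneg _)
    (Filter.Eventually.of_forall fun t => abs_nonneg _) hmg hmg'
  refine hH.trans (le_of_eq ?_)
  rw [rpow_half_int, rpow_half_int]

/-- The key annulus estimate for Dirichlet data: there is a constant `C > 0` such
that for every `ε > 0` and every radial `F̄ ∈ C_c^∞(ℝ³)`, `F̄(x) = f̄(|x|)`,
`(1/ε²) ∫_{ε<|x|<2ε} |F̄|² dx ≤ C ε ‖F̄/|x|‖_{L²(ℝ³)} ‖∇F̄/|x|‖_{L²(ℝ³)}`. -/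
theorem annulus_estimate :
    ∃ C > 0, ∀ ε > 0, ∀ (Fb : E3 → ℝ) (fb : ℝ → ℝ),
      ContDiff ℝ (⊤ : ℕ∞) Fb → HasCompactSupport Fb → (∀ x : E3, Fb x = fb ‖x‖) →
      (1 / ε ^ 2) * ∫ x in {x : E3 | ε < ‖x‖ ∧ ‖x‖ < 2 * ε}, (Fb x) ^ 2
        ≤ C * ε * Real.sqrt (∫ x : E3, (Fb x) ^ 2 / ‖x‖ ^ 2)
            * Real.sqrt (∫ x : E3, ‖gradient Fb x‖ ^ 2 / ‖x‖ ^ 2) := by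
  refine ⟨6, by norm_num, fun ε hε Fb fb hFb hsupp hrad => ?_⟩
  set κ : ℝ := (volume (Metric.ball (0:E3) 1)).toReal with hκdef
  have hκ : 0 < κ :=
    ENNReal.toReal_pos (Metric.measure_ball_pos _ _ one_pos).ne' measure_ball_lt_top.ne
  set e : E3 := EuclideanSpace.single (0 : Fin 3) (1:ℝ) with hedef
  have he : ‖e‖ = 1 := by simp [hedef]
  set g : ℝ → ℝ := fun r => Fb (r • e) with hgdef
  -- g is the radial profile along any unit vector
  have hgu : ∀ u : E3, ‖u‖ = 1 → ∀ t : ℝ, Fb (t • u) = g t := by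
    intro u hu t
    show Fb (t • u) = Fb (t • e)
    rw [hrad, hrad]
    congr 1
    rw [norm_smul, norm_smul, hu, he]
  have hgr : ∀ x : E3, Fb x = g ‖x‖ := by
    intro x
    show Fb x = Fb (‖x‖ • e)
    rw [hrad, hrad]
    congr 1
    rw [norm_smul, he, Real.norm_eq_abs, abs_norm, mul_one]
  -- smoothness and compact support of g
  have hsm : ContDiff ℝ (⊤ : ℕ∞) g := hFb.comp (contDiff_id.smul contDiff_const)
  have hiso : Isometry (fun r : ℝ => r • e) := by
    apply Isometry.of_dist_eq
    intro a b
    simp only [dist_eq_norm, ← sub_smul, norm_smul, he, mul_one, Real.norm_eq_abs]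
  have hgsupp : HasCompactSupport g := hsupp.comp_isClosedEmbedding hiso.isClosedEmbedding
  -- derivative of g along any unit vector
  have hder : ∀ u : E3, ‖u‖ = 1 → ∀ t : ℝ, HasDerivAt g (fderiv ℝ Fb (t • u) u) t := by
    intro u hu t
    have h1 : HasDerivAt (fun s : ℝ => s • u) u t := by
      simpa using (hasDerivAt_id t).smul_const u
    have h2 := ((hFb.differentiable (by simp) (t • u)).hasFDerivAt).comp_hasDerivAt t h1
    have h3 : Fb ∘ (fun s : ℝ => s • u) = g := funext fun s => hgu u hu s
    rwa [h3] at h2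
  have hderiv_g : ∀ u : E3, ‖u‖ = 1 → ∀ t : ℝ, deriv g t = fderiv ℝ Fb (t • u) u :=
    fun u hu t => (hder u hu t).deriv
  have hgradnorm : ∀ x : E3, ‖gradient Fb x‖ = ‖fderiv ℝ Fb x‖ := by
    intro x
    rw [gradient]
    exact LinearIsometryEquiv.norm_map _ _
  -- key 1D integrals
  set A' : ℝ := ∫ t in Ioi (0:ℝ), g t ^ 2 with hA'def
  set B' : ℝ := ∫ t in Ioi (0:ℝ), (deriv g t) ^ 2 with hB'def
  have hA'0 : 0 ≤ A' := integral_nonneg fun t => sq_nonneg _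
  have hB'0 : 0 ≤ B' := integral_nonneg fun t => sq_nonneg _
  set A : ℝ := ∫ x : E3, (Fb x) ^ 2 / ‖x‖ ^ 2 with hAdef
  set B : ℝ := ∫ x : E3, ‖gradient Fb x‖ ^ 2 / ‖x‖ ^ 2 with hBdef
  have hB0 : 0 ≤ B := integral_nonneg fun x => by positivity
  -- A = 3 κ A'
  have hA : A = 3 * κ * A' := by
    rw [hAdef]
    have h1 : ∀ x : E3, (Fb x) ^ 2 / ‖x‖ ^ 2 = (fun r => g r ^ 2 / r ^ 2) ‖x‖ := by
      intro x; rw [hgr x]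
    calc ∫ x : E3, (Fb x) ^ 2 / ‖x‖ ^ 2
        = ∫ x : E3, (fun r => g r ^ 2 / r ^ 2) ‖x‖ := by simp only [h1]
      _ = 3 * κ * ∫ r in Ioi (0:ℝ), r ^ 2 * (g r ^ 2 / r ^ 2) := by
          rw [hκdef]; exact polar3 (fun r => g r ^ 2 / r ^ 2)
      _ = 3 * κ * A' := by
          congr 1
          refine setIntegral_congr_fun measurableSet_Ioi fun r hr => ?_
          have : (r:ℝ) ^ 2 ≠ 0 := pow_ne_zero 2 (ne_of_gt hr)
          rw [mul_div_assoc', mul_div_cancel_left₀ _ this]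
  have hA0 : 0 ≤ A := by rw [hA]; positivity
  -- derivative data for the integrability of the gradient term
  have hfd_cd : ContDiff ℝ (⊤ : ℕ∞) (fderiv ℝ Fb) := hFb.fderiv_right (by simp)
  have hfd_supp : HasCompactSupport (fderiv ℝ Fb) := hsupp.fderiv ℝ
  have hfd2_supp : HasCompactSupport (fderiv ℝ (fderiv ℝ Fb)) := hfd_supp.fderiv ℝ
  obtain ⟨L, hL⟩ := (hfd_cd.continuous_fderiv (by simp)).bounded_above_of_compact_support
    hfd2_supp
  have hL0 : (0:ℝ) ≤ L := le_trans (norm_nonneg _) (hL 0)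
  have hg'0 : deriv g 0 = 0 := by
    have hodd : (fun t : ℝ => g (-t)) = g := by
      funext t
      show Fb ((-t) • e) = Fb (t • e)
      rw [hrad, hrad]
      congr 1
      rw [norm_smul, norm_smul]
      simp
    have h1 : HasDerivAt g (deriv g 0) 0 := ((hsm.differentiable (by simp)) 0).hasDerivAt
    have h2 : HasDerivAt (fun t : ℝ => g (-t)) (-(deriv g 0)) 0 := by
      have h0 : HasDerivAt g (deriv g 0) (-(0:ℝ)) := by simpa using h1
      simpa [Function.comp_def] using h0.comp 0 (hasDerivAt_neg 0)
    rw [hodd] at h2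
    have := h1.unique h2
    linarith
  have hfd0 : fderiv ℝ Fb 0 = 0 := by
    ext v
    show fderiv ℝ Fb 0 v = (0 : E3 →L[ℝ] ℝ) v
    rw [ContinuousLinearMap.zero_apply]
    rcases eq_or_ne v 0 with rfl | hv
    · simp
    · have hvnorm : ‖v‖ ≠ 0 := norm_ne_zero_iff.2 hv
      set u : E3 := ‖v‖⁻¹ • v with hudef
      have hu : ‖u‖ = 1 := norm_smul_inv_norm (𝕜 := ℝ) hv
      have hψ1 : HasDerivAt (fun t : ℝ => Fb (t • v)) (fderiv ℝ Fb 0 v) 0 := by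
        have h1 : HasDerivAt (fun s : ℝ => s • v) v 0 := by
          simpa using (hasDerivAt_id (0:ℝ)).smul_const v
        have h2 := ((hFb.differentiable (by simp) ((0:ℝ) • v)).hasFDerivAt).comp_hasDerivAt 0 h1
        simpa [Function.comp_def] using h2
      have heq : (fun t : ℝ => Fb (t • v)) = fun t => g (t * ‖v‖) := by
        funext t
        rw [← hgu u hu (t * ‖v‖)]
        congr 1
        rw [hudef, smul_smul, mul_assoc, mul_inv_cancel₀ hvnorm, mul_one]
      have hψ2 : HasDerivAt (fun t : ℝ => g (t * ‖v‖)) (deriv g 0 * ‖v‖) 0 := by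
        have h1 : HasDerivAt (fun t : ℝ => t * ‖v‖) ‖v‖ 0 := by
          simpa using (hasDerivAt_id (0:ℝ)).mul_const ‖v‖
        have h0 : HasDerivAt g (deriv g 0) ((0:ℝ) * ‖v‖) := by
          simpa using ((hsm.differentiable (by simp)) 0).hasDerivAt
        exact h0.comp 0 h1
      rw [heq] at hψ1
      rw [hψ1.unique hψ2, hg'0, zero_mul]
  have hlip : ∀ x : E3, ‖fderiv ℝ Fb x‖ ≤ L * ‖x‖ := by
    intro x
    have hd : ∀ y ∈ (univ : Set E3), DifferentiableAt ℝ (fderiv ℝ Fb) y :=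
      fun y _ => (hfd_cd.differentiable (by simp)) y
    have := convex_univ.norm_image_sub_le_of_norm_fderiv_le hd (fun y _ => hL y)
      (mem_univ (0:E3)) (mem_univ x)
    simpa [hfd0] using this
  have hgradcont : Continuous (gradient Fb) := by
    rw [show gradient Fb = fun x => (InnerProductSpace.toDual ℝ E3).symm (fderiv ℝ Fb x) from rfl]
    exact (LinearIsometryEquiv.continuous _).comp (hFb.continuous_fderiv (by simp))
  have hKmeas : MeasurableSet (tsupport Fb) := (isClosed_tsupport _).measurableSet
  have hDint : Integrable ((tsupport Fb).indicator fun _ => L ^ 2) := by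
    rw [integrable_indicator_iff hKmeas]
    exact integrableOn_const hsupp.measure_lt_top.ne
  have hΦmeas : AEStronglyMeasurable (fun x : E3 => ‖gradient Fb x‖ ^ 2 / ‖x‖ ^ 2) volume :=
    (((hgradcont.norm.pow 2).measurable).div
      ((continuous_norm.pow 2).measurable)).aestronglyMeasurable
  have hΦbd : ∀ x : E3, ‖‖gradient Fb x‖ ^ 2 / ‖x‖ ^ 2‖
      ≤ (tsupport Fb).indicator (fun _ => L ^ 2) x := by
    intro x
    by_cases hx : x ∈ tsupport Fb
    · rw [indicator_of_mem hx, Real.norm_eq_abs, abs_of_nonneg (by positivity)]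
      rcases eq_or_ne x 0 with rfl | hx0
      · simp only [norm_zero]
        norm_num
        positivity
      · have h1 : ‖gradient Fb x‖ ≤ L * ‖x‖ := by rw [hgradnorm x]; exact hlip x
        have hx0' : (0:ℝ) < ‖x‖ := norm_pos_iff.2 hx0
        rw [div_le_iff₀ (by positivity)]
        calc ‖gradient Fb x‖ ^ 2 ≤ (L * ‖x‖) ^ 2 := pow_le_pow_left₀ (norm_nonneg _) h1 2
          _ = L ^ 2 * ‖x‖ ^ 2 := by ring
    · rw [indicator_of_notMem hx]
      have h0 : fderiv ℝ Fb x = 0 := by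
        by_contra h
        exact hx (support_fderiv_subset ℝ (Function.mem_support.2 h))
      have hg0 : ‖gradient Fb x‖ = 0 := by rw [hgradnorm x, h0, norm_zero]
      simp [hg0]
  have hΦint : Integrable (fun x : E3 => ‖gradient Fb x‖ ^ 2 / ‖x‖ ^ 2) :=
    hDint.mono' hΦmeas (ae_of_all _ hΦbd)
  -- B ≥ 3 κ B'
  have hpol2 : ∫ x : E3, (deriv g ‖x‖) ^ 2 / ‖x‖ ^ 2 = 3 * κ * B' := by
    calc ∫ x : E3, (deriv g ‖x‖) ^ 2 / ‖x‖ ^ 2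
        = 3 * κ * ∫ r in Ioi (0:ℝ), r ^ 2 * ((deriv g r) ^ 2 / r ^ 2) := by
          rw [hκdef]; exact polar3 (fun r => (deriv g r) ^ 2 / r ^ 2)
      _ = 3 * κ * B' := by
          congr 1
          refine setIntegral_congr_fun measurableSet_Ioi fun r hr => ?_
          have : (r:ℝ) ^ 2 ≠ 0 := pow_ne_zero 2 (ne_of_gt hr)
          rw [mul_div_assoc', mul_div_cancel_left₀ _ this]
  have hpt : ∀ x : E3, (deriv g ‖x‖) ^ 2 / ‖x‖ ^ 2 ≤ ‖gradient Fb x‖ ^ 2 / ‖x‖ ^ 2 := by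
    intro x
    rcases eq_or_ne x 0 with rfl | hx0
    · simp
    · have hx0' : (0:ℝ) < ‖x‖ := norm_pos_iff.2 hx0
      set u : E3 := ‖x‖⁻¹ • x with hudef
      have hu : ‖u‖ = 1 := norm_smul_inv_norm (𝕜 := ℝ) hx0
      have h1 : deriv g ‖x‖ = fderiv ℝ Fb x u := by
        rw [hderiv_g u hu ‖x‖, hudef, smul_inv_smul₀ (norm_ne_zero_iff.2 hx0) x]
      have h2 : (deriv g ‖x‖) ^ 2 ≤ ‖gradient Fb x‖ ^ 2 := by
        rw [h1, hgradnorm x, ← sq_abs]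
        have h3 := (fderiv ℝ Fb x).le_opNorm u
        rw [hu, mul_one] at h3
        exact pow_le_pow_left₀ (abs_nonneg _) (by rwa [← Real.norm_eq_abs]) 2
      gcongr
  have hB : 3 * κ * B' ≤ B := by
    rw [hBdef, ← hpol2]
    exact integral_mono_of_nonneg (ae_of_all _ fun x => by positivity) hΦint (ae_of_all _ hpt)
  -- the sup bound
  set M : ℝ := 2 * Real.sqrt A' * Real.sqrt B' with hMdef
  have hM0 : 0 ≤ M := by positivity
  have h3κ : (0:ℝ) < 3 * κ := by positivity
  have hFsqint : Integrable (fun x : E3 => Fb x ^ 2) :=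
    (hFb.continuous.pow 2).integrable_of_hasCompactSupport
      (by simpa [pow_two] using hsupp.mul_left (f := Fb))
  have hann_meas : MeasurableSet {x : E3 | ε < ‖x‖ ∧ ‖x‖ < 2 * ε} := by
    have : {x : E3 | ε < ‖x‖ ∧ ‖x‖ < 2 * ε}
        = {x : E3 | ε < ‖x‖} ∩ {x : E3 | ‖x‖ < 2 * ε} := rfl
    rw [this]
    exact (measurableSet_lt measurable_const continuous_norm.measurable).inter
      (measurableSet_lt continuous_norm.measurable measurable_const)
  have hsub : {x : E3 | ε < ‖x‖ ∧ ‖x‖ < 2 * ε} ⊆ Metric.ball (0:E3) (2 * ε) :=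
    fun x hx => mem_ball_zero_iff.2 hx.2
  have hfin : volume {x : E3 | ε < ‖x‖ ∧ ‖x‖ < 2 * ε} < ⊤ :=
    lt_of_le_of_lt (measure_mono hsub) measure_ball_lt_top
  have hub : ∀ x ∈ {x : E3 | ε < ‖x‖ ∧ ‖x‖ < 2 * ε}, Fb x ^ 2 ≤ M := by
    intro x hx
    rw [hgr x]
    exact agmon g hsm hgsupp (lt_trans hε hx.1)
  have hIle : ∫ x in {x : E3 | ε < ‖x‖ ∧ ‖x‖ < 2 * ε}, Fb x ^ 2
      ≤ M * (volume {x : E3 | ε < ‖x‖ ∧ ‖x‖ < 2 * ε}).toReal := by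
    have h1 := setIntegral_mono_on hFsqint.integrableOn
      (integrableOn_const hfin.ne) hann_meas hub
    rw [setIntegral_const] at h1
    simpa [smul_eq_mul, mul_comm, measureReal_def] using h1
  have hvol : (volume {x : E3 | ε < ‖x‖ ∧ ‖x‖ < 2 * ε}).toReal ≤ 8 * ε ^ 3 * κ := by
    have hd : Module.finrank ℝ E3 = 3 := by simp [finrank_euclideanSpace_fin]
    have h2 : volume (Metric.ball (0:E3) (2 * ε))
        = ENNReal.ofReal ((2 * ε) ^ 3) * volume (Metric.ball (0:E3) 1) := by
      rw [Measure.addHaar_ball _ _ (by positivity : (0:ℝ) ≤ 2 * ε), hd]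
    calc (volume {x : E3 | ε < ‖x‖ ∧ ‖x‖ < 2 * ε}).toReal
        ≤ (volume (Metric.ball (0:E3) (2 * ε))).toReal :=
          ENNReal.toReal_mono measure_ball_lt_top.ne (measure_mono hsub)
      _ = (2 * ε) ^ 3 * κ := by
          rw [h2, ENNReal.toReal_mul, ENNReal.toReal_ofReal (by positivity), hκdef]
      _ = 8 * ε ^ 3 * κ := by ring
  have hsA' : Real.sqrt A' = Real.sqrt A / Real.sqrt (3 * κ) := by
    have hA' : A' = A / (3 * κ) := by
      rw [hA, mul_comm, mul_div_assoc, div_self h3κ.ne', mul_one]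
    rw [hA', Real.sqrt_div hA0]
  have hsB' : Real.sqrt B' ≤ Real.sqrt B / Real.sqrt (3 * κ) := by
    rw [← Real.sqrt_div hB0]
    apply Real.sqrt_le_sqrt
    rw [le_div_iff₀ h3κ]
    linarith [hB]
  have hsqAB : (0:ℝ) ≤ Real.sqrt A * Real.sqrt B := mul_nonneg (Real.sqrt_nonneg _) (Real.sqrt_nonneg _)
  calc (1 / ε ^ 2) * ∫ x in {x : E3 | ε < ‖x‖ ∧ ‖x‖ < 2 * ε}, Fb x ^ 2
      ≤ (1 / ε ^ 2) * (M * (8 * ε ^ 3 * κ)) := by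
        apply mul_le_mul_of_nonneg_left _ (by positivity)
        exact hIle.trans (mul_le_mul_of_nonneg_left hvol hM0)
    _ = 8 * κ * ε * M := by field_simp
    _ = 16 * κ * ε * (Real.sqrt A' * Real.sqrt B') := by rw [hMdef]; ring
    _ ≤ 16 * κ * ε * ((Real.sqrt A / Real.sqrt (3 * κ)) * (Real.sqrt B / Real.sqrt (3 * κ))) := by
        apply mul_le_mul_of_nonneg_left _ (by positivity)
        exact mul_le_mul (le_of_eq hsA') hsB' (Real.sqrt_nonneg _) (div_nonneg (Real.sqrt_nonneg _) (Real.sqrt_nonneg _))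
    _ = 16 * κ * ε * ((Real.sqrt A * Real.sqrt B) / (3 * κ)) := by
        rw [div_mul_div_comm, Real.mul_self_sqrt h3κ.le]
    _ = (16 / 3) * ε * (Real.sqrt A * Real.sqrt B) := by
        field_simp
    _ ≤ 6 * ε * Real.sqrt A * Real.sqrt B := by nlinarith [mul_nonneg hε.le hsqAB]
end
end
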